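/- arXiv:2012.14247 — 7 statements merged into one kernel-verified Lean document; each statement's English description precedes it below -/
import Mathlib

section
/- For every complex number p and every complex constant c, the power series τ_d(z) = c·Σ_{n≥2} e_n (z−p)^n, whose coefficients are defined by e_2 = 1/2, e_3 = 0, e_4 = p/24 and the recursion e_{n+2} = (p·e_n + e_{n−1})/((n+1)(n+2)) for n ≥ 3, has infinite radius of convergence; the entire function τ_d it defines satisfies τ_d''(z) = z·τ_d(z) + c for all z ∈ ℂ, together with τ_d(p) = 0 and τ_d'(p) = 0 (i.e. it is a solution of the nonhomogeneous Airy equation with a double zero at z = p). -/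
set_option maxHeartbeats 1000000

open Nat FormalMultilinearSeries Filter




lemma airy_coeff_bound (p : ℂ) (e : ℕ → ℂ)
    (he0 : e 0 = 0) (he1 : e 1 = 0) (he2 : e 2 = 1 / 2) (he3 : e 3 = 0) (he4 : e 4 = p / 24)
    (herec : ∀ n : ℕ, 3 ≤ n →
      e (n + 2) = (p * e n + e (n - 1)) / (((n : ℂ) + 1) * ((n : ℂ) + 2))) :
    ∀ n, ‖e n‖ ≤ (‖p‖ + 2) ^ n / (n / 2)! := by
  set M : ℝ := ‖p‖ + 2 with hMdef
  clear_value M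
  have hp0 : (0:ℝ) ≤ ‖p‖ := norm_nonneg p
  have hM1 : (1:ℝ) ≤ M := by rw [hMdef]; linarith
  have hM0 : (0:ℝ) < M := by linarith
  have hMp : ‖p‖ ≤ M := by rw [hMdef]; linarith
  intro n
  induction n using Nat.strong_induction_on with
  | _ n ih =>
    rcases n with _|(_|(_|(_|(_|m))))
    · simpa [he0] using by positivity
    · simpa [he1] using by positivity
    · rw [he2]
      have h1 : ‖(1/2 : ℂ)‖ = 1/2 := by norm_num
      have h2 : (((0+1+1 : ℕ) / 2)! : ℝ) = 1 := by norm_num [Nat.factorial]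
      rw [h1, h2, div_one]
      norm_num
      have h3 : (1:ℝ) ≤ M^2 := one_le_pow₀ hM1
      linarith
    · simpa [he3] using by positivity
    · rw [he4]
      have h1 : ‖(p/24 : ℂ)‖ = ‖p‖/24 := by rw [norm_div]; norm_num
      have h2 : (((0+1+1+1+1 : ℕ) / 2)! : ℝ) = 2 := by norm_num [Nat.factorial]
      rw [h1, h2, (by norm_num : (0+1+1+1+1 : ℕ) = 4)]
      have h4 : M ≤ M^4 := le_self_pow₀ hM1 (by norm_num)
      linarith
    · -- n = m + 5 = (m+3) + 2
      have hnorm : m+1+1+1+1+1 = m+5 := by omega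
      rw [hnorm]
      have h1 : ‖e (m+3)‖ ≤ M^(m+3) / ((m+3)/2)! := ih (m+3) (by omega)
      have h2 : ‖e (m+2)‖ ≤ M^(m+2) / ((m+2)/2)! := ih (m+2) (by omega)
      have hrec := herec (m+3) (by omega)
      rw [(by omega : (m+3) - 1 = m + 2), (by omega : m+3+2 = m+5)] at hrec
      have hden : ‖(((m+3:ℕ) : ℂ) + 1) * (((m+3:ℕ) : ℂ) + 2)‖ = ((m:ℝ)+4) * ((m:ℝ)+5) := by
        rw [norm_mul]
        rw [(by push_cast; ring : (((m+3:ℕ)) : ℂ) + 1 = (((m+4 : ℕ)):ℂ)),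
            (by push_cast; ring : (((m+3:ℕ)) : ℂ) + 2 = (((m+5 : ℕ)):ℂ)),
            Complex.norm_natCast, Complex.norm_natCast]
        push_cast; ring
      set k : ℕ := (m+3)/2 with hkdef
      have hk1 : 1 ≤ k := by omega
      have hk52 : (m+5)/2 = k + 1 := by omega
      rw [hk52]
      have hkm : (k:ℝ) ≤ (m:ℝ)+3 := by exact_mod_cast Nat.cast_le.mpr (by omega : k ≤ m+3)
      have hknn : (0:ℝ) ≤ (k:ℝ) := Nat.cast_nonneg k
      have hkfac : (k ! : ℝ) ≤ (k:ℝ) * ((m+2)/2)! := by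
        have h5 : k * (k-1)! = k ! := Nat.mul_factorial_pred (by omega)
        have hle : (k-1)! ≤ ((m+2)/2)! := Nat.factorial_le (by omega)
        have : k ! ≤ k * ((m+2)/2)! := by
          rw [← h5]; exact Nat.mul_le_mul_left k hle
        exact_mod_cast this
      have fac_pos : ∀ j : ℕ, (0:ℝ) < (j ! : ℝ) := fun j => by exact_mod_cast j.factorial_pos
      have h2' : ‖e (m+2)‖ ≤ M^(m+2) * k / k ! := by
        refine h2.trans ?_
        rw [div_le_div_iff₀ (fac_pos _) (fac_pos _)]
        calc M^(m+2) * (k ! : ℝ) ≤ M^(m+2) * ((k:ℝ) * ((m+2)/2)!) :=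
              mul_le_mul_of_nonneg_left hkfac (by positivity)
          _ = M^(m+2) * (k:ℝ) * ((m+2)/2)! := by ring
      have hX0 : (0:ℝ) < M^(m+2) := by positivity
      have hX1 : (1:ℝ) ≤ M^(m+2) := one_le_pow₀ hM1
      have hM3 : (1:ℝ) ≤ M^3 := one_le_pow₀ hM1
      have hmm0 : (0:ℝ) ≤ (m:ℝ) := Nat.cast_nonneg m
      have key0 : (‖p‖ * M^(m+3) + M^(m+2) * k) * ((k:ℝ)+1) ≤
          M^(m+5) * (((m:ℝ)+4) * ((m:ℝ)+5)) := by
        have c1 : ‖p‖ * M^(m+3) ≤ M^3 * M^(m+2) := by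
          calc ‖p‖ * M^(m+3) ≤ M * M^(m+3) := mul_le_mul_of_nonneg_right hMp (by positivity)
            _ = M^2 * M^(m+2) := by ring
            _ ≤ M^3 * M^(m+2) := by
                apply mul_le_mul_of_nonneg_right _ hX0.le
                exact pow_le_pow_right₀ hM1 (by norm_num)
        have c3 : M^(m+2) * (k:ℝ) ≤ M^(m+2) * ((m:ℝ)+3) := mul_le_mul_of_nonneg_left hkm hX0.le
        have step1 : (‖p‖ * M^(m+3) + M^(m+2) * (k:ℝ)) * ((k:ℝ)+1) ≤
            (M^3 * M^(m+2) + M^(m+2) * ((m:ℝ)+3)) * ((m:ℝ)+4) :=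
          mul_le_mul (add_le_add c1 c3) (by linarith) (by linarith) (by positivity)
        refine step1.trans ?_
        have c5 : M^(m+2) * ((m:ℝ)+3) * ((m:ℝ)+4) ≤ M^3 * (M^(m+2) * ((m:ℝ)+3) * ((m:ℝ)+4)) :=
          le_mul_of_one_le_left (by positivity) hM3
        have c7 : M^3 * M^(m+2) * (((m:ℝ)+4) * ((m:ℝ)+4)) ≤ M^3 * M^(m+2) * (((m:ℝ)+4) * ((m:ℝ)+5)) := by
          apply mul_le_mul_of_nonneg_left _ (by positivity)
          exact mul_le_mul_of_nonneg_left (by linarith) (by linarith)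
        have e5 : M^(m+5) = M^3 * M^(m+2) := by ring
        rw [e5]
        nlinarith [c5, c7]
      have hfk1 : ((k+1)! : ℝ) = ((k:ℝ)+1) * (k ! : ℝ) := by
        push_cast [Nat.factorial_succ]; ring
      have key : ‖p‖ * (M^(m+3) / k !) + M^(m+2) * k / k ! ≤
          M^(m+5) / ((k+1)! : ℝ) * (((m:ℝ)+4) * ((m:ℝ)+5)) := by
        have hL : ‖p‖ * (M^(m+3)/(k ! : ℝ)) + M^(m+2)*(k:ℝ)/(k ! : ℝ)
            = (‖p‖*M^(m+3) + M^(m+2)*(k:ℝ))/(k ! : ℝ) := by ring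
        rw [hL, hfk1, div_mul_eq_mul_div, div_le_div_iff₀ (fac_pos k) (by positivity)]
        calc (‖p‖*M^(m+3) + M^(m+2)*(k:ℝ)) * (((k:ℝ)+1) * (k ! : ℝ))
            = ((‖p‖*M^(m+3) + M^(m+2)*(k:ℝ)) * ((k:ℝ)+1)) * (k ! : ℝ) := by ring
          _ ≤ (M^(m+5) * (((m:ℝ)+4) * ((m:ℝ)+5))) * (k ! : ℝ) :=
              mul_le_mul_of_nonneg_right key0 (fac_pos _).le
          _ = M ^ (m + 5) * (((m:ℝ) + 4) * ((m:ℝ) + 5)) * (k ! : ℝ) := by ring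
      have hstep : ‖e (m+5)‖ ≤
          (‖p‖ * (M^(m+3) / k !) + M^(m+2) * k / k !) / (((m:ℝ)+4) * ((m:ℝ)+5)) := by
        rw [hrec, norm_div, hden]
        have hnum : ‖p * e (m+3) + e (m+2)‖ ≤ ‖p‖ * (M^(m+3) / k !) + M^(m+2) * k / k ! := by
          calc ‖p * e (m+3) + e (m+2)‖ ≤ ‖p * e (m+3)‖ + ‖e (m+2)‖ := norm_add_le _ _
            _ ≤ ‖p‖ * (M^(m+3) / k !) + M^(m+2) * k / k ! := by
                rw [norm_mul]
                exact add_le_add (mul_le_mul_of_nonneg_left h1 hp0) h2'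
        exact (div_le_div_iff_of_pos_right (by positivity : (0:ℝ) < ((m:ℝ)+4) * ((m:ℝ)+5))).mpr hnum
      refine hstep.trans ?_
      rw [div_le_iff₀ (by positivity : (0:ℝ) < ((m:ℝ)+4) * ((m:ℝ)+5))]
      exact key

lemma hasSum_coeff_of_ball_top {f : ℂ → ℂ} {P : FormalMultilinearSeries ℂ ℂ ℂ} {x : ℂ}
    (h : HasFPowerSeriesOnBall f P x ⊤) (z : ℂ) :
    HasSum (fun n => P.coeff n * (z - x) ^ n) (f z) := by
  have hm : z - x ∈ Metric.eball (0 : ℂ) ⊤ := by simp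
  have := h.hasSum hm
  rw [show x + (z - x) = z by ring] at this
  refine this.congr_fun fun n => ?_
  rw [apply_eq_pow_smul_coeff, smul_eq_mul, mul_comm]

lemma deriv_series_top {f : ℂ → ℂ} {P : FormalMultilinearSeries ℂ ℂ ℂ} {x : ℂ}
    (h : HasFPowerSeriesOnBall f P x ⊤) :
    ∃ Q : FormalMultilinearSeries ℂ ℂ ℂ,
      HasFPowerSeriesOnBall (deriv f) Q x ⊤ ∧
      ∀ n, Q.coeff n = ((n : ℂ) + 1) * P.coeff (n + 1) := by
  have hf := h.fderiv
  set L : (ℂ →L[ℂ] ℂ) →L[ℂ] ℂ := ContinuousLinearMap.apply ℂ ℂ (1 : ℂ) with hL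
  refine ⟨L.compFormalMultilinearSeries P.derivSeries, ?_, ?_⟩
  · have h2 := L.comp_hasFPowerSeriesOnBall hf
    have : (L ∘ fderiv ℂ f) = deriv f := by
      funext z
      simp [hL, ContinuousLinearMap.apply_apply, fderiv_apply_one_eq_deriv]
    rwa [this] at h2
  · intro n
    have hd := P.derivSeries_apply_diag n (x := (1:ℂ))
    show (L.compFormalMultilinearSeries P.derivSeries n) 1 = _
    rw [ContinuousLinearMap.compFormalMultilinearSeries_apply]
    show L ((P.derivSeries n) fun _ => (1:ℂ)) = _
    rw [hL]
    rw [ContinuousLinearMap.apply_apply]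
    rw [hd]
    show ((n+1) : ℕ) • (P (n+1) fun _ => (1:ℂ)) = _
    rw [nsmul_eq_mul]
    push_cast
    rfl


/-- For every `p c : ℂ`, the power series `τ_d(z) = c·Σ_{n≥2} e_n (z−p)^n` with
`e 2 = 1/2`, `e 3 = 0`, `e 4 = p/24` and `e (n+2) = (p e n + e (n-1))/((n+1)(n+2))` for `n ≥ 3`
converges everywhere, and the entire function it defines solves `τ'' = z τ + c` with a
double zero at `p`. -/
theorem nonhomogeneous_airy_double_zero_solution (p c : ℂ) (e : ℕ → ℂ)
    (he0 : e 0 = 0) (he1 : e 1 = 0) (he2 : e 2 = 1 / 2) (he3 : e 3 = 0) (he4 : e 4 = p / 24)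
    (herec : ∀ n : ℕ, 3 ≤ n →
      e (n + 2) = (p * e n + e (n - 1)) / (((n : ℂ) + 1) * ((n : ℂ) + 2))) :
    ∃ τ : ℂ → ℂ, Differentiable ℂ τ ∧
      (∀ z : ℂ, HasSum (fun n : ℕ => c * e n * (z - p) ^ n) (τ z)) ∧
      (∀ z : ℂ, deriv (deriv τ) z = z * τ z + c) ∧
      τ p = 0 ∧ deriv τ p = 0 := by
  have hb : ∀ n, ‖e n‖ ≤ (‖p‖ + 2) ^ n / (n / 2)! :=
    airy_coeff_bound p e he0 he1 he2 he3 he4 herec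
  set P : FormalMultilinearSeries ℂ ℂ ℂ := ofScalars ℂ (fun n => c * e n) with hPdef
  have hcoeff : ∀ n, P.coeff n = c * e n := by
    intro n
    show (P n) 1 = c * e n
    rw [hPdef]
    have := ofScalars_apply_eq (𝕜 := ℂ) (E := ℂ) (c := fun n => c * e n) 1 n
    simpa using this
  have hnormP : ∀ n, ‖P n‖ = ‖c * e n‖ := fun n => by
    rw [hPdef]; exact ofScalars_norm ℂ _ n
  -- radius is infinite
  have hrad : P.radius = ⊤ := by
    rw [eq_top_iff]
    refine ENNReal.le_of_forall_nnreal_lt fun r _ => ?_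
    apply P.le_radius_of_tendsto (l := 0)
    set M : ℝ := ‖p‖ + 2 with hM
    set X : ℝ := max 1 (M * r) with hX
    have hX1 : (1:ℝ) ≤ X := le_max_left _ _
    have hMr : M * r ≤ X := le_max_right _ _
    have hr0 : (0:ℝ) ≤ (r:ℝ) := r.coe_nonneg
    have hM0 : (0:ℝ) ≤ M := by positivity
    have fac_pos : ∀ j : ℕ, (0:ℝ) < (j ! : ℝ) := fun j => by exact_mod_cast j.factorial_pos
    have bound : ∀ n : ℕ, ‖P n‖ * (r:ℝ)^n ≤ ‖c‖ * X * ((X^2)^(n/2) / (n/2)!) := by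
      intro n
      rw [hnormP, norm_mul]
      calc ‖c‖ * ‖e n‖ * (r:ℝ)^n = ‖c‖ * (‖e n‖ * (r:ℝ)^n) := by ring
        _ ≤ ‖c‖ * ((M*(r:ℝ))^n / (n/2)!) := by
            apply mul_le_mul_of_nonneg_left _ (norm_nonneg c)
            calc ‖e n‖ * (r:ℝ)^n ≤ (M^n/(n/2)!) * (r:ℝ)^n :=
                  mul_le_mul_of_nonneg_right (hb n) (by positivity)
              _ = (M*(r:ℝ))^n/(n/2)! := by rw [mul_pow]; ring
        _ ≤ ‖c‖ * (X^(2*(n/2)+1) / (n/2)!) := by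
            apply mul_le_mul_of_nonneg_left _ (norm_nonneg c)
            apply (div_le_div_iff_of_pos_right (fac_pos _)).mpr
            exact (pow_le_pow_left₀ (by positivity) hMr n).trans
              (pow_le_pow_right₀ hX1 (by omega))
        _ = ‖c‖ * X * ((X^2)^(n/2)/(n/2)!) := by rw [pow_succ, pow_mul]; ring
    apply squeeze_zero (fun n => by positivity) bound
    have t2 : Tendsto (fun n : ℕ => n / 2) atTop atTop :=
      tendsto_atTop_atTop.mpr fun b => ⟨2*b, fun n hn => by omega⟩
    have t3 := (FloorSemiring.tendsto_pow_div_factorial_atTop (K := ℝ) (X^2)).comp t2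
    have t4 := t3.const_mul (‖c‖ * X)
    rw [mul_zero] at t4
    exact t4
  -- the function
  set τ : ℂ → ℂ := fun z => P.sum (z - p) with hτ
  have hP : HasFPowerSeriesOnBall τ P p ⊤ := by
    refine ⟨hrad.ge, by simp, fun {y} _ => ?_⟩
    have := P.hasSum (x := y) (by rw [hrad]; exact EMetric.mem_ball.mpr (edist_lt_top _ _))
    simpa [hτ, add_sub_cancel_left] using this
  obtain ⟨Q1, hQ1, hc1⟩ := deriv_series_top hP
  obtain ⟨Q2, hQ2, hc2⟩ := deriv_series_top hQ1
  have S0 : ∀ z : ℂ, HasSum (fun n : ℕ => c * e n * (z - p) ^ n) (τ z) := fun z =>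
    (hasSum_coeff_of_ball_top hP z).congr_fun fun n => by rw [hcoeff]
  have S1 : ∀ z : ℂ, HasSum (fun n : ℕ => Q1.coeff n * (z - p) ^ n) (deriv τ z) := fun z =>
    hasSum_coeff_of_ball_top hQ1 z
  have S2 : ∀ z : ℂ, HasSum (fun n : ℕ => Q2.coeff n * (z - p) ^ n) (deriv (deriv τ) z) := fun z =>
    hasSum_coeff_of_ball_top hQ2 z
  have hQ2coeff : ∀ n : ℕ, Q2.coeff n = ((n:ℂ)+1) * ((n:ℂ)+2) * (c * e (n+2)) := by
    intro n
    have h1 := hc1 (n+1)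
    rw [hcoeff] at h1
    rw [hc2, h1, (by omega : n+1+1 = n+2)]
    push_cast
    ring
  refine ⟨τ, ?_, S0, ?_, ?_, ?_⟩
  · intro z
    exact (hP.analyticAt_of_mem (by rw [EMetric.mem_ball]; exact edist_lt_top _ _)).differentiableAt
  · -- the ODE
    intro z
    set w : ℂ := z - p with hw
    set D : ℕ → ℂ := fun n => if n = 0 then c else c * e (n-1) * w^n with hD
    have hshift : HasSum (fun n : ℕ => D (n+1)) (w * τ z) := by
      refine ((S0 z).mul_left w).congr_fun fun n => ?_
      rw [hD]
      simp only [Nat.add_sub_cancel, if_neg (Nat.succ_ne_zero n)]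
      ring
    have hDsum : HasSum D (w * τ z + c) := by
      have := (hasSum_nat_add_iff (f := D) 1).mp hshift
      simpa [hD] using this
    have total := ((S0 z).mul_left p).add hDsum
    have key : ∀ n : ℕ, Q2.coeff n * w^n = p * (c * e n * w^n) + D n := by
      intro n
      rw [hQ2coeff]
      match n with
      | 0 => simp [hD, he0, he2]; push_cast; ring
      | 1 => simp [hD, he0, he1, he3]
      | 2 => simp [hD, he1, he2, he4]; push_cast; ring
      | (m+3) =>
        have hrec := herec (m+3) (by omega)
        rw [(by omega : (m+3) - 1 = m+2)] at hrec
        have hDval : D (m+3) = c * e (m+2) * w^(m+3) := by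
          rw [hD]
          simp only [if_neg (by omega : ¬(m+3 = 0))]
          rw [(by omega : (m+3)-1 = m+2)]
        rw [hDval]
        have h1 : ((m+3:ℕ):ℂ) + 1 ≠ 0 := by
          rw [(by push_cast; ring : ((m+3:ℕ):ℂ) + 1 = ((m+4:ℕ):ℂ))]
          exact Nat.cast_ne_zero.mpr (by omega)
        have h2 : ((m+3:ℕ):ℂ) + 2 ≠ 0 := by
          rw [(by push_cast; ring : ((m+3:ℕ):ℂ) + 2 = ((m+5:ℕ):ℂ))]
          exact Nat.cast_ne_zero.mpr (by omega)
        have hd : (((m+3:ℕ):ℂ) + 1) * (((m+3:ℕ):ℂ) + 2) ≠ 0 := mul_ne_zero h1 h2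
        have hrec' : e (m+3+2) * ((((m+3:ℕ):ℂ) + 1) * (((m+3:ℕ):ℂ) + 2))
            = p * e (m+3) + e (m+2) := by
          rw [hrec, div_mul_cancel₀ _ hd]
        linear_combination c * w^(m+3) * hrec'
    have total' : HasSum (fun n : ℕ => Q2.coeff n * w^n) (p * τ z + (w * τ z + c)) := by
      refine total.congr_fun fun n => ?_
      rw [← hw]
      exact key n
    have := (S2 z).unique total'
    rw [this, hw]
    ring
  · -- τ p = 0
    have h := S0 p
    have h0 : (fun n : ℕ => c * e n * (p - p) ^ n) = fun _ => (0:ℂ) := by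
      funext n
      match n with
      | 0 => simp [he0]
      | (m+1) => simp [sub_self]
    rw [h0] at h
    exact h.unique hasSum_zero
  · -- deriv τ p = 0
    have h := S1 p
    have h0 : (fun n : ℕ => Q1.coeff n * (p - p) ^ n) = fun _ => (0:ℂ) := by
      funext n
      match n with
      | 0 => simp [hc1, hcoeff, he1]
      | (m+1) => simp [sub_self]
    rw [h0] at h
    exact h.unique hasSum_zero
end

section
/- For every real ν and every z ∈ ℂ, the entire function s̃(z) = ∫_0^π sin(z·sin t)·cos(ν t) dt satisfies the nonhomogeneous Bessel equation z²·s̃''(z) + z·s̃'(z) + (z² − ν²)·s̃(z) = (1 + cos(πν))·z. In particular, when 1 + cos(πν) ≠ 0, the function s(z) = s̃(z)/(1 + cos(πν)) satisfies z²·s''(z) + z·s'(z) + (z² − ν²)·s(z) = z, so s is the Lommel function s_{0,ν}. -/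
open MeasureTheory intervalIntegral Metric

lemma norm_ccos_le (w : ℂ) : ‖Complex.cos w‖ ≤ Real.exp ‖w‖ := by
  have h : ∀ u : ℂ, ‖Complex.exp u‖ ≤ Real.exp ‖u‖ := fun u => by
    rw [Complex.norm_exp]
    exact Real.exp_le_exp.2 ((le_abs_self _).trans (Complex.abs_re_le_norm u))
  rw [Complex.cos]
  calc ‖(Complex.exp (w * Complex.I) + Complex.exp (-w * Complex.I)) / 2‖
      ≤ (‖Complex.exp (w * Complex.I)‖ + ‖Complex.exp (-w * Complex.I)‖) / 2 := by
        rw [norm_div, show ‖(2:ℂ)‖ = 2 by norm_num]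
        gcongr
        exact norm_add_le _ _
    _ ≤ (Real.exp ‖w‖ + Real.exp ‖w‖) / 2 := by
        gcongr <;> [skip; skip]
        · exact (h _).trans (by rw [norm_mul, Complex.norm_I, mul_one])
        · exact (h _).trans (by rw [norm_mul, norm_neg, Complex.norm_I, mul_one])
    _ = Real.exp ‖w‖ := by ring

lemma norm_csin_le (w : ℂ) : ‖Complex.sin w‖ ≤ Real.exp ‖w‖ := by
  have h : ∀ u : ℂ, ‖Complex.exp u‖ ≤ Real.exp ‖u‖ := fun u => by
    rw [Complex.norm_exp]
    exact Real.exp_le_exp.2 ((le_abs_self _).trans (Complex.abs_re_le_norm u))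
  rw [Complex.sin]
  calc ‖(Complex.exp (-w * Complex.I) - Complex.exp (w * Complex.I)) * Complex.I / 2‖
      = ‖Complex.exp (-w * Complex.I) - Complex.exp (w * Complex.I)‖ / 2 := by
        rw [norm_div, norm_mul, Complex.norm_I, mul_one, show ‖(2:ℂ)‖ = 2 by norm_num]
    _ ≤ (Real.exp ‖w‖ + Real.exp ‖w‖) / 2 := by
        rw [div_le_div_iff_of_pos_right] <;> [skip; norm_num]
        refine (norm_sub_le _ _).trans (add_le_add ?_ ?_)
        · exact (h _).trans (by rw [norm_mul, norm_neg, Complex.norm_I, mul_one])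
        · exact (h _).trans (by rw [norm_mul, Complex.norm_I, mul_one])
    _ = Real.exp ‖w‖ := by ring

lemma paramderiv (f f' : ℂ → ℝ → ℂ) (hf : ∀ x, Continuous (f x)) (hf' : ∀ x, Continuous (f' x))
    (hd : ∀ (t : ℝ) (x : ℂ), HasDerivAt (fun z => f z t) (f' x t) x)
    (hb : ∀ (x : ℂ) (t : ℝ), ‖f' x t‖ ≤ Real.exp ‖x‖) (x₀ : ℂ) :
    HasDerivAt (fun z => ∫ t in (0:ℝ)..Real.pi, f z t) (∫ t in (0:ℝ)..Real.pi, f' x₀ t) x₀ := by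
  have := intervalIntegral.hasDerivAt_integral_of_dominated_loc_of_deriv_le
    (F := f) (F' := f') (x₀ := x₀) (bound := fun _ => Real.exp (‖x₀‖ + 1))
    (a := 0) (b := Real.pi) (μ := volume) (ball_mem_nhds x₀ one_pos)
    (Filter.Eventually.of_forall fun x => (hf x).aestronglyMeasurable)
    ((hf x₀).intervalIntegrable _ _)
    (hf' x₀).aestronglyMeasurable
    (ae_of_all _ fun t _ x hx => (hb x t).trans (Real.exp_le_exp.2 (by
      have h1 : ‖x - x₀‖ < 1 := mem_ball_iff_norm.mp hx
      have h2 : ‖x‖ - ‖x₀‖ ≤ ‖x - x₀‖ := norm_sub_norm_le x x₀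
      linarith)))
    intervalIntegrable_const
    (ae_of_all _ fun t _ x _ => hd t x)
  exact this.2

/-- For every real `ν`, the entire function `s̃(z) = ∫_0^π sin(z sin t) cos(ν t) dt`
satisfies the nonhomogeneous Bessel equation
`z² s̃'' + z s̃' + (z² − ν²) s̃ = (1 + cos(πν)) z`; consequently, when `1 + cos(πν) ≠ 0`,
`s = s̃ / (1 + cos(πν))` satisfies `z² s'' + z s' + (z² − ν²) s = z`. -/
theorem lommel_integral_representation (ν : ℝ)
    (s : ℂ → ℂ)
    (hs : ∀ z : ℂ, s z = ∫ t in (0:ℝ)..Real.pi,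
      Complex.sin (z * (Real.sin t : ℂ)) * ((Real.cos (ν * t) : ℝ) : ℂ)) :
    (∀ z : ℂ, z ^ 2 * deriv (deriv s) z + z * deriv s z + (z ^ 2 - (ν : ℂ) ^ 2) * s z
      = (1 + (Real.cos (Real.pi * ν) : ℂ)) * z) ∧
    ((1 + Real.cos (Real.pi * ν)) ≠ 0 →
      ∀ z : ℂ,
        z ^ 2 * deriv (deriv (fun w => s w / (1 + (Real.cos (Real.pi * ν) : ℂ)))) z
          + z * deriv (fun w => s w / (1 + (Real.cos (Real.pi * ν) : ℂ))) z
          + (z ^ 2 - (ν : ℂ) ^ 2) * (s z / (1 + (Real.cos (Real.pi * ν) : ℂ))) = z) := by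
  set f0 : ℂ → ℝ → ℂ := fun z t => Complex.sin (z * (Real.sin t : ℂ)) * ((Real.cos (ν * t) : ℝ) : ℂ) with hf0
  set f1 : ℂ → ℝ → ℂ := fun z t => ((Real.sin t : ℝ) : ℂ) * Complex.cos (z * (Real.sin t : ℂ)) * ((Real.cos (ν * t) : ℝ) : ℂ) with hf1
  set f2 : ℂ → ℝ → ℂ := fun z t => -((Real.sin t : ℝ) : ℂ) ^ 2 * Complex.sin (z * (Real.sin t : ℂ)) * ((Real.cos (ν * t) : ℝ) : ℂ) with hf2
  have hc0 : ∀ x, Continuous (f0 x) := fun x => by simp only [hf0]; fun_prop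
  have hc1 : ∀ x, Continuous (f1 x) := fun x => by simp only [hf1]; fun_prop
  have hc2 : ∀ x, Continuous (f2 x) := fun x => by simp only [hf2]; fun_prop
  have hd0 : ∀ (t : ℝ) (x : ℂ), HasDerivAt (fun z => f0 z t) (f1 x t) x := by
    intro t x
    have h := ((Complex.hasDerivAt_sin (x * (Real.sin t : ℂ))).comp x
      ((hasDerivAt_id x).mul_const ((Real.sin t : ℂ)))).mul_const ((Real.cos (ν * t) : ℝ) : ℂ)
    have e : f1 x t = Complex.cos (x * (Real.sin t : ℂ)) * (1 * ((Real.sin t : ℝ) : ℂ))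
        * ((Real.cos (ν * t) : ℝ) : ℂ) := by simp only [hf1]; ring
    rw [e]; exact h
  have hd1 : ∀ (t : ℝ) (x : ℂ), HasDerivAt (fun z => f1 z t) (f2 x t) x := by
    intro t x
    have h := (HasDerivAt.const_mul ((Real.sin t : ℝ) : ℂ)
      ((Complex.hasDerivAt_cos (x * (Real.sin t : ℂ))).comp x
        ((hasDerivAt_id x).mul_const ((Real.sin t : ℂ))))).mul_const ((Real.cos (ν * t) : ℝ) : ℂ)
    have e : f2 x t = ((Real.sin t : ℝ) : ℂ) * (-Complex.sin (x * (Real.sin t : ℂ))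
        * (1 * ((Real.sin t : ℝ) : ℂ))) * ((Real.cos (ν * t) : ℝ) : ℂ) := by
      simp only [hf2]; ring
    rw [e]; exact h
  have hxs : ∀ (x : ℂ) (t : ℝ), ‖x * ((Real.sin t : ℝ) : ℂ)‖ ≤ ‖x‖ := by
    intro x t
    rw [norm_mul, Complex.norm_real, Real.norm_eq_abs]
    exact mul_le_of_le_one_right (norm_nonneg x) (Real.abs_sin_le_one t)
  have hb1 : ∀ (x : ℂ) (t : ℝ), ‖f1 x t‖ ≤ Real.exp ‖x‖ := by
    intro x t
    simp only [hf1]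
    rw [norm_mul, norm_mul, Complex.norm_real, Complex.norm_real, Real.norm_eq_abs,
      Real.norm_eq_abs]
    calc |Real.sin t| * ‖Complex.cos (x * (Real.sin t : ℂ))‖ * |Real.cos (ν * t)|
        ≤ 1 * Real.exp ‖x‖ * 1 := by
          refine mul_le_mul (mul_le_mul (Real.abs_sin_le_one t)
            ((norm_ccos_le _).trans (Real.exp_le_exp.2 (hxs x t))) (norm_nonneg _) zero_le_one)
            (Real.abs_cos_le_one _) (abs_nonneg _) (by positivity)
      _ = Real.exp ‖x‖ := by ring
  have hb2 : ∀ (x : ℂ) (t : ℝ), ‖f2 x t‖ ≤ Real.exp ‖x‖ := by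
    intro x t
    simp only [hf2]
    rw [norm_mul, norm_mul, norm_neg, norm_pow, Complex.norm_real, Complex.norm_real,
      Real.norm_eq_abs, Real.norm_eq_abs]
    have hsq : |Real.sin t| ^ 2 ≤ 1 := by
      calc |Real.sin t| ^ 2 ≤ 1 ^ 2 :=
            pow_le_pow_left₀ (abs_nonneg _) (Real.abs_sin_le_one t) 2
        _ = 1 := one_pow 2
    calc |Real.sin t| ^ 2 * ‖Complex.sin (x * (Real.sin t : ℂ))‖ * |Real.cos (ν * t)|
        ≤ 1 * Real.exp ‖x‖ * 1 := by
          refine mul_le_mul (mul_le_mul hsq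
            ((norm_csin_le _).trans (Real.exp_le_exp.2 (hxs x t))) (norm_nonneg _) zero_le_one)
            (Real.abs_cos_le_one _) (abs_nonneg _) (by positivity)
      _ = Real.exp ‖x‖ := by ring
  have hfun : s = fun z => ∫ t in (0:ℝ)..Real.pi, f0 z t := funext hs
  have hS : ∀ z, HasDerivAt s (∫ t in (0:ℝ)..Real.pi, f1 z t) z := by
    intro z; rw [hfun]; exact paramderiv f0 f1 hc0 hc1 hd0 hb1 z
  have hds : deriv s = fun z => ∫ t in (0:ℝ)..Real.pi, f1 z t := funext fun z => (hS z).deriv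
  have hS2 : ∀ z, HasDerivAt (deriv s) (∫ t in (0:ℝ)..Real.pi, f2 z t) z := by
    intro z; rw [hds]; exact paramderiv f1 f2 hc1 hc2 hd1 hb2 z
  have hdds : ∀ z, deriv (deriv s) z = ∫ t in (0:ℝ)..Real.pi, f2 z t := fun z => (hS2 z).deriv
  -- main identity
  have main : ∀ z : ℂ, z ^ 2 * deriv (deriv s) z + z * deriv s z + (z ^ 2 - (ν : ℂ) ^ 2) * s z
      = (1 + (Real.cos (Real.pi * ν) : ℂ)) * z := by
    intro z
    rw [hdds z, (hS z).deriv, hs z]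
    have i0 : IntervalIntegrable (f0 z) MeasureTheory.volume 0 Real.pi :=
      (hc0 z).intervalIntegrable _ _
    have i1 : IntervalIntegrable (f1 z) MeasureTheory.volume 0 Real.pi :=
      (hc1 z).intervalIntegrable _ _
    have i2 : IntervalIntegrable (f2 z) MeasureTheory.volume 0 Real.pi :=
      (hc2 z).intervalIntegrable _ _
    have hcomb : z ^ 2 * (∫ t in (0:ℝ)..Real.pi, f2 z t) + z * (∫ t in (0:ℝ)..Real.pi, f1 z t)
        + (z ^ 2 - (ν : ℂ) ^ 2) * (∫ t in (0:ℝ)..Real.pi, f0 z t)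
        = ∫ t in (0:ℝ)..Real.pi,
            (z ^ 2 * f2 z t + z * f1 z t + (z ^ 2 - (ν : ℂ) ^ 2) * f0 z t) := by
      rw [intervalIntegral.integral_add ((i2.const_mul _).add (i1.const_mul _)) (i0.const_mul _),
        intervalIntegral.integral_add (i2.const_mul _) (i1.const_mul _),
        intervalIntegral.integral_const_mul, intervalIntegral.integral_const_mul,
        intervalIntegral.integral_const_mul]
    set G : ℝ → ℂ := fun t => -z * ((Real.cos t : ℝ) : ℂ) * Complex.cos (z * (Real.sin t : ℂ))
        * ((Real.cos (ν * t) : ℝ) : ℂ)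
        - (ν : ℂ) * Complex.sin (z * (Real.sin t : ℂ)) * ((Real.sin (ν * t) : ℝ) : ℂ) with hGdef
    have hG : ∀ t : ℝ, HasDerivAt G
        (z ^ 2 * f2 z t + z * f1 z t + (z ^ 2 - (ν : ℂ) ^ 2) * f0 z t) t := by
      intro t
      have h1 : HasDerivAt (fun t : ℝ => ((Real.sin t : ℝ) : ℂ)) ((Real.cos t : ℝ) : ℂ) t :=
        (Real.hasDerivAt_sin t).ofReal_comp
      have h2 : HasDerivAt (fun t : ℝ => ((Real.cos t : ℝ) : ℂ)) ((-Real.sin t : ℝ) : ℂ) t :=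
        (Real.hasDerivAt_cos t).ofReal_comp
      have h3 : HasDerivAt (fun t : ℝ => Complex.sin (z * (Real.sin t : ℂ)))
          (Complex.cos (z * (Real.sin t : ℂ)) * (z * ((Real.cos t : ℝ) : ℂ))) t :=
        (Complex.hasDerivAt_sin _).comp t (h1.const_mul z)
      have h4 : HasDerivAt (fun t : ℝ => Complex.cos (z * (Real.sin t : ℂ)))
          (-Complex.sin (z * (Real.sin t : ℂ)) * (z * ((Real.cos t : ℝ) : ℂ))) t :=
        (Complex.hasDerivAt_cos _).comp t (h1.const_mul z)
      have h5r : HasDerivAt (fun t : ℝ => Real.cos (ν * t)) (-Real.sin (ν * t) * (ν * 1)) t :=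
        (Real.hasDerivAt_cos (ν * t)).comp t ((hasDerivAt_id t).const_mul ν)
      have h5 : HasDerivAt (fun t : ℝ => ((Real.cos (ν * t) : ℝ) : ℂ))
          ((-Real.sin (ν * t) * (ν * 1) : ℝ) : ℂ) t := h5r.ofReal_comp
      have h6r : HasDerivAt (fun t : ℝ => Real.sin (ν * t)) (Real.cos (ν * t) * (ν * 1)) t :=
        (Real.hasDerivAt_sin (ν * t)).comp t ((hasDerivAt_id t).const_mul ν)
      have h6 : HasDerivAt (fun t : ℝ => ((Real.sin (ν * t) : ℝ) : ℂ))
          ((Real.cos (ν * t) * (ν * 1) : ℝ) : ℂ) t := h6r.ofReal_comp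
      have hA := ((h2.const_mul (-z)).mul h4).mul h5
      have hB := (h3.const_mul ((ν : ℂ))).mul h6
      have hAB := hA.sub hB
      rw [hGdef]
      refine hAB.congr_deriv ?_
      symm
      simp only [hf0, hf1, hf2, Pi.mul_apply]
      push_cast
      have pyth : Complex.sin (t : ℂ) ^ 2 + Complex.cos (t : ℂ) ^ 2 = 1 :=
        Complex.sin_sq_add_cos_sq _
      linear_combination (-(z ^ 2) * Complex.sin (z * Complex.sin (t : ℂ))
        * Complex.cos ((ν : ℂ) * (t : ℂ))) * pyth
    have hint : IntervalIntegrable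
        (fun t => z ^ 2 * f2 z t + z * f1 z t + (z ^ 2 - (ν : ℂ) ^ 2) * f0 z t)
        MeasureTheory.volume 0 Real.pi :=
      ((i2.const_mul _).add (i1.const_mul _)).add (i0.const_mul _)
    have hftc := intervalIntegral.integral_eq_sub_of_hasDerivAt (fun t _ => hG t) hint
    rw [hcomb, hftc, hGdef]
    simp only [Real.sin_pi, Real.cos_pi, Real.sin_zero, Real.cos_zero, Complex.ofReal_zero,
      mul_zero, Complex.sin_zero, Complex.cos_zero, Complex.ofReal_one, Complex.ofReal_neg,
      mul_one, zero_mul, sub_zero]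
    rw [mul_comm ν Real.pi]
    ring
  refine ⟨main, fun hcnz z => ?_⟩
  set c : ℂ := 1 + (Real.cos (Real.pi * ν) : ℂ) with hcdef
  have hcne : c ≠ 0 := by
    rw [hcdef]
    intro h
    exact hcnz (by exact_mod_cast h)
  have hdq : deriv (fun w => s w / c) = fun w => deriv s w / c := by
    funext w
    exact deriv_div_const c
  have h2q : deriv (deriv (fun w => s w / c)) z = deriv (deriv s) z / c := by
    rw [hdq]
    exact deriv_div_const c
  rw [h2q, hdq]
  have hm := main z
  field_simp
  linear_combination hm
end

section
/- For every real ν and every z ∈ ℂ, the following change-of-variables identity holds: ∫_0^π sin(z·sin t)·cos(ν t) dt = ∫_0^1 sin(z·t) · (cos(ν·arcsin t) + cos(νπ − ν·arcsin t))/√(1 − t²) dt, where arcsin takes values in (−π/2, π/2). -/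
open MeasureTheory Real Set intervalIntegral

lemma sin_image_Ioo : Real.sin '' Set.Ioo 0 (Real.pi / 2) = Set.Ioo 0 1 := by
  ext u
  constructor
  · rintro ⟨t, ⟨ht0, ht1⟩, rfl⟩
    constructor
    · exact Real.sin_pos_of_pos_of_lt_pi ht0 (ht1.trans (by linarith [Real.pi_pos]))
    · calc Real.sin t < Real.sin (Real.pi / 2) := by
            apply Real.strictMonoOn_sin ⟨by linarith [Real.pi_pos], ht1.le⟩
              ⟨by linarith [Real.pi_pos], le_refl _⟩ ht1
        _ = 1 := Real.sin_pi_div_two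
  · rintro ⟨hu0, hu1⟩
    exact ⟨Real.arcsin u, ⟨Real.arcsin_pos.2 hu0, Real.arcsin_lt_pi_div_two.2 hu1⟩,
      Real.sin_arcsin (by linarith) hu1.le⟩

/-- Change-of-variables identity:
`∫_0^π sin(z sin t) cos(ν t) dt
  = ∫_0^1 sin(z t) (cos(ν arcsin t) + cos(νπ − ν arcsin t))/√(1−t²) dt`. -/
theorem lommel_integral_change_of_variables (ν : ℝ) (z : ℂ) :
    (∫ t in (0:ℝ)..Real.pi,
        Complex.sin (z * (Real.sin t : ℂ)) * ((Real.cos (ν * t) : ℝ) : ℂ))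
      = ∫ t in (0:ℝ)..1, Complex.sin (z * (t : ℂ)) *
          ((((Real.cos (ν * Real.arcsin t)
              + Real.cos (ν * Real.pi - ν * Real.arcsin t)) / Real.sqrt (1 - t ^ 2)) : ℝ) : ℂ) := by
  have hpi := Real.pi_pos
  set f : ℝ → ℂ := fun t => Complex.sin (z * (Real.sin t : ℂ)) * ((Real.cos (ν * t) : ℝ) : ℂ)
    with hf
  have hfc : Continuous f := by
    apply Continuous.mul
    · exact Complex.continuous_sin.comp (by continuity)
    · exact Complex.continuous_ofReal.comp (by continuity)
  -- Step 1: split and reflect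
  have h1 : (∫ t in (0:ℝ)..Real.pi, f t)
      = ∫ t in (0:ℝ)..(Real.pi/2), (f t + f (Real.pi - t)) := by
    have hint2 : IntervalIntegrable (fun t => f (Real.pi - t)) volume 0 (Real.pi/2) :=
      ((hfc.comp (continuous_const.sub continuous_id)).intervalIntegrable _ _)
    rw [intervalIntegral.integral_add (hfc.intervalIntegrable _ _) hint2]
    have h2 : (∫ t in (0:ℝ)..(Real.pi/2), f (Real.pi - t))
        = ∫ t in (Real.pi - Real.pi/2)..(Real.pi - 0), f t := by
      exact intervalIntegral.integral_comp_sub_left f Real.pi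
    rw [h2]
    rw [show Real.pi - Real.pi/2 = Real.pi/2 by ring, sub_zero]
    rw [intervalIntegral.integral_add_adjacent_intervals (hfc.intervalIntegrable _ _)
      (hfc.intervalIntegrable _ _)]
  rw [h1]
  -- Step 2: rewrite as set integral over Ioo 0 (π/2)
  rw [intervalIntegral.integral_of_le (by linarith), MeasureTheory.integral_Ioc_eq_integral_Ioo,
    intervalIntegral.integral_of_le (by norm_num : (0:ℝ) ≤ 1),
    MeasureTheory.integral_Ioc_eq_integral_Ioo]
  -- Step 3: change of variables u = sin t
  rw [← sin_image_Ioo,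
    MeasureTheory.integral_image_eq_integral_abs_deriv_smul measurableSet_Ioo
      (fun x _ => (Real.hasDerivAt_sin x).hasDerivWithinAt)
      (Real.injOn_sin.mono (fun x hx => Set.mem_Icc.mpr ⟨by linarith [hx.1], hx.2.le⟩))]
  apply MeasureTheory.setIntegral_congr_fun measurableSet_Ioo
  intro t ht
  have ht0 : 0 < t := ht.1
  have ht1 : t < Real.pi / 2 := ht.2
  have hcos : 0 < Real.cos t := Real.cos_pos_of_mem_Ioo ⟨by linarith, ht1⟩
  have harc : Real.arcsin (Real.sin t) = t :=
    Real.arcsin_sin (by linarith) ht1.le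
  have hsq : Real.sqrt (1 - Real.sin t ^ 2) = Real.cos t :=
    (Real.cos_eq_sqrt_one_sub_sin_sq (by linarith) ht1.le).symm
  simp only [hf, harc, hsq, abs_of_pos hcos, Real.sin_pi_sub, Complex.real_smul]
  have : Real.cos (ν * (Real.pi - t)) = Real.cos (ν * Real.pi - ν * t) := by ring_nf
  rw [this]
  push_cast
  have hc : Complex.cos (t:ℂ) ≠ 0 := by
    rw [← Complex.ofReal_cos]; exact_mod_cast hcos.ne'
  field_simp
end

section
/- For every real ν with |ν| < 1, the function g(t) = (cos(ν·arcsin t) + cos(νπ − ν·arcsin t))/√(1 − t²) is positive and strictly increasing on the open interval (0, 1). -/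
open Real

private lemma polya_aux_ratio (ν : ℝ) (hν : |ν| < 1) {u v : ℝ}
    (hu : 0 < u) (huv : u < v) (hv : v < π / 2) :
    Real.cos (ν * v) / Real.sin v < Real.cos (ν * u) / Real.sin u := by
  have hv0 : 0 < v := hu.trans huv
  have hpi := Real.pi_pos
  have hsinu : 0 < Real.sin u := Real.sin_pos_of_pos_of_lt_pi hu (by linarith)
  have hsinv : 0 < Real.sin v := Real.sin_pos_of_pos_of_lt_pi hv0 (by linarith)
  have hνu : |ν| * u < π / 2 := lt_of_le_of_lt
    (mul_le_of_le_one_left hu.le hν.le) (huv.trans hv)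
  have hcosu : 0 < Real.cos (ν * u) := by
    rw [← Real.cos_abs, abs_mul, abs_of_pos hu]
    exact Real.cos_pos_of_mem_Ioo ⟨by nlinarith [abs_nonneg ν], hνu⟩
  have hle : Real.cos (ν * v) ≤ Real.cos (ν * u) := by
    rw [← Real.cos_abs (ν * v), ← Real.cos_abs (ν * u), abs_mul, abs_mul,
      abs_of_pos hu, abs_of_pos hv0]
    apply Real.cos_le_cos_of_nonneg_of_le_pi (by positivity)
    · calc |ν| * v ≤ v := mul_le_of_le_one_left hv0.le hν.le
        _ ≤ π := (hv.trans_le (by linarith [Real.pi_pos])).le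
    · exact mul_le_mul_of_nonneg_left huv.le (abs_nonneg ν)
  rw [div_lt_div_iff₀ hsinv hsinu]
  calc Real.cos (ν * v) * Real.sin u ≤ Real.cos (ν * u) * Real.sin u :=
        mul_le_mul_of_nonneg_right hle hsinu.le
    _ < Real.cos (ν * u) * Real.sin v := by
        apply mul_lt_mul_of_pos_left _ hcosu
        apply Real.strictMonoOn_sin ⟨by linarith [Real.pi_pos], (huv.trans hv).le⟩
          ⟨by linarith [Real.pi_pos], hv.le⟩ huv

private lemma polya_rewrite (ν : ℝ) {t : ℝ} (ht : t ∈ Set.Ioo (0:ℝ) 1) :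
    (Real.cos (ν * Real.arcsin t) + Real.cos (ν * Real.pi - ν * Real.arcsin t))
        / Real.sqrt (1 - t ^ 2)
      = (2 * Real.cos (ν * π / 2)) *
          (Real.cos (ν * (π / 2 - Real.arcsin t)) / Real.sin (π / 2 - Real.arcsin t)) := by
  have h1 : Real.sin (π / 2 - Real.arcsin t) = Real.sqrt (1 - t ^ 2) := by
    rw [Real.sin_pi_div_two_sub, Real.cos_arcsin]
  have h2 : Real.cos (ν * Real.arcsin t) + Real.cos (ν * π - ν * Real.arcsin t)
      = 2 * Real.cos (ν * π / 2) * Real.cos (ν * (π / 2 - Real.arcsin t)) := by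
    rw [Real.cos_add_cos]
    ring_nf
    rw [show ν * Real.arcsin t + ν * π * (-1/2) = -(-(ν * Real.arcsin t) + ν * π * (1/2)) by ring,
      Real.cos_neg]
  rw [h2, h1, mul_div_assoc]

/-- For `|ν| < 1`, the function
`g(t) = (cos(ν arcsin t) + cos(νπ − ν arcsin t))/√(1−t²)`
is positive and strictly increasing on `(0,1)`. -/
theorem polya_weight_pos_strictMono (ν : ℝ) (hν : |ν| < 1) :
    (∀ t ∈ Set.Ioo (0:ℝ) 1,
      0 < (Real.cos (ν * Real.arcsin t) + Real.cos (ν * Real.pi - ν * Real.arcsin t))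
            / Real.sqrt (1 - t ^ 2)) ∧
    StrictMonoOn
      (fun t : ℝ =>
        (Real.cos (ν * Real.arcsin t) + Real.cos (ν * Real.pi - ν * Real.arcsin t))
          / Real.sqrt (1 - t ^ 2))
      (Set.Ioo (0:ℝ) 1) := by
  have hpi := Real.pi_pos
  have harc : ∀ t ∈ Set.Ioo (0:ℝ) 1,
      0 < π / 2 - Real.arcsin t ∧ π / 2 - Real.arcsin t < π / 2 := by
    intro t ht
    constructor
    · have := Real.arcsin_lt_pi_div_two.mpr ht.2
      linarith
    · have := Real.arcsin_pos.mpr ht.1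
      linarith
  have hcos2 : 0 < 2 * Real.cos (ν * π / 2) := by
    have : |ν * π / 2| < π / 2 := by
      rw [abs_div, abs_mul, abs_of_pos hpi, abs_two]
      apply div_lt_div_of_pos_right _ two_pos
      calc |ν| * π < 1 * π := mul_lt_mul_of_pos_right hν hpi
        _ = π := one_mul π
    have := Real.cos_pos_of_mem_Ioo (Set.mem_Ioo.mpr ⟨neg_lt_of_abs_lt this, lt_of_abs_lt this⟩)
    linarith
  constructor
  · intro t ht
    rw [polya_rewrite ν ht]
    obtain ⟨h1, h2⟩ := harc t ht
    have hsin : 0 < Real.sin (π / 2 - Real.arcsin t) :=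
      Real.sin_pos_of_pos_of_lt_pi h1 (h2.trans (by linarith))
    have hcosν : 0 < Real.cos (ν * (π / 2 - Real.arcsin t)) := by
      apply Real.cos_pos_of_mem_Ioo
      constructor
      · nlinarith [neg_abs_le ν, abs_nonneg ν]
      · nlinarith [le_abs_self ν, abs_nonneg ν]
    positivity
  · intro s hs t ht hst
    simp only
    rw [polya_rewrite ν hs, polya_rewrite ν ht]
    apply mul_lt_mul_of_pos_left _ hcos2
    obtain ⟨hs1, hs2⟩ := harc s hs
    obtain ⟨ht1, ht2⟩ := harc t ht
    have : π / 2 - Real.arcsin t < π / 2 - Real.arcsin s := by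
      have := Real.strictMonoOn_arcsin ⟨by linarith [hs.1], hs.2.le⟩ ⟨by linarith [hs.1, hst], ht.2.le⟩ hst
      linarith
    exact polya_aux_ratio ν hν ht1 this hs2
end

section
/- (Pólya, 1918, first part) Let f : (0,1) → ℝ be positive and nondecreasing on (0,1), with f integrable on (0,1). Then every zero of the entire function V(z) = ∫_0^1 sin(z·t)·f(t) dt (z ∈ ℂ, sin extended to ℂ) is a real number. -/
set_option maxHeartbeats 1000000

open Complex MeasureTheory Set

lemma csinh_re (z : ℂ) : (Complex.sinh z).re = Real.sinh z.re * Real.cos z.im := by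
  conv_lhs => rw [← Complex.re_add_im z]
  rw [Complex.sinh_add, Complex.sinh_mul_I, Complex.cosh_mul_I]
  simp [← Complex.ofReal_sinh, ← Complex.ofReal_cosh, ← Complex.ofReal_sin, ← Complex.ofReal_cos]

lemma csinh_im (z : ℂ) : (Complex.sinh z).im = Real.cosh z.re * Real.sin z.im := by
  conv_lhs => rw [← Complex.re_add_im z]
  rw [Complex.sinh_add, Complex.sinh_mul_I, Complex.cosh_mul_I]
  simp [← Complex.ofReal_sinh, ← Complex.ofReal_cosh, ← Complex.ofReal_sin, ← Complex.ofReal_cos]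

lemma ccosh_re (z : ℂ) : (Complex.cosh z).re = Real.cosh z.re * Real.cos z.im := by
  conv_lhs => rw [← Complex.re_add_im z]
  rw [Complex.cosh_add, Complex.sinh_mul_I, Complex.cosh_mul_I]
  simp [← Complex.ofReal_sinh, ← Complex.ofReal_cosh, ← Complex.ofReal_sin, ← Complex.ofReal_cos]

lemma ccosh_im (z : ℂ) : (Complex.cosh z).im = Real.sinh z.re * Real.sin z.im := by
  conv_lhs => rw [← Complex.re_add_im z]
  rw [Complex.cosh_add, Complex.sinh_mul_I, Complex.cosh_mul_I]
  simp [← Complex.ofReal_sinh, ← Complex.ofReal_cosh, ← Complex.ofReal_sin, ← Complex.ofReal_cos]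

/-- The key pointwise inequality. -/
lemma key_ineq (ξ : ℂ) (hy : 0 < ξ.re) (a : ℝ) (h0 : 0 ≤ a) (h1 : a ≤ 1) :
    Real.sinh ξ.re * (Real.cosh ξ.re - Real.cosh (ξ.re * a)) ≤
      ((starRingEnd ℂ) (Complex.sinh ξ) * (Complex.cosh ξ - Complex.cosh (ξ * (a:ℂ)))).re := by
  set y := ξ.re with hyy
  set x := ξ.im with hxx
  have hre : (ξ * (a:ℂ)).re = y * a := by simp [Complex.mul_re, hyy]
  have him : (ξ * (a:ℂ)).im = x * a := by simp [Complex.mul_im, hxx]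
  have expand : ((starRingEnd ℂ) (Complex.sinh ξ) * (Complex.cosh ξ - Complex.cosh (ξ * (a:ℂ)))).re
      = (Real.sinh y * Real.cos x) * (Real.cosh y * Real.cos x - Real.cosh (y*a) * Real.cos (x*a))
        + (Real.cosh y * Real.sin x) * (Real.sinh y * Real.sin x - Real.sinh (y*a) * Real.sin (x*a)) := by
    simp [Complex.mul_re, Complex.sub_re, Complex.sub_im, csinh_re, csinh_im, ccosh_re, ccosh_im,
      hre, him, hyy, hxx]
  rw [expand]
  have hS : 0 < Real.sinh y := Real.sinh_pos_iff.2 hy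
  have hs : 0 ≤ Real.sinh (y*a) := Real.sinh_nonneg_iff.2 (by positivity)
  have hc : (1:ℝ) ≤ Real.cosh (y*a) := Real.one_le_cosh _
  have hC : (1:ℝ) ≤ Real.cosh y := Real.one_le_cosh _
  have hK : Real.cosh y * Real.sinh (y*a) ≤ Real.sinh y * Real.cosh (y*a) := by
    have h' : Real.sinh (y*a - y) ≤ 0 := by
      have h'' : y*a - y ≤ 0 := by nlinarith
      simpa using Real.sinh_le_sinh.2 h''
    rw [Real.sinh_sub] at h'
    linarith
  have p1 : Real.sin x ^ 2 + Real.cos x ^ 2 = 1 := Real.sin_sq_add_cos_sq x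
  have p2 : Real.sin (x*a) ^ 2 + Real.cos (x*a) ^ 2 = 1 := Real.sin_sq_add_cos_sq (x*a)
  have hSc : 0 ≤ Real.sinh y * Real.cosh (y*a) := by positivity
  have hP : Real.cos x * Real.cos (x*a) + Real.sin x * Real.sin (x*a) ≤ 1 := by
    nlinarith [sq_nonneg (Real.cos x - Real.cos (x*a)), sq_nonneg (Real.sin x - Real.sin (x*a))]
  have hP1 : Real.cos x * Real.cos (x*a) ≤ 1 := by
    nlinarith [sq_nonneg (Real.cos x - Real.cos (x*a)), sq_nonneg (Real.sin x), sq_nonneg (Real.sin (x*a))]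
  have hp1 : Real.sinh y * Real.cosh y * (Real.sin x^2 + Real.cos x^2) = Real.sinh y * Real.cosh y * 1 := by
    rw [p1]
  rcases le_or_gt 0 (Real.sin x * Real.sin (x*a)) with hQ | hQ
  · have t1 : Real.cosh y * Real.sinh (y*a) * (Real.sin x * Real.sin (x*a)) ≤
        Real.sinh y * Real.cosh (y*a) * (Real.sin x * Real.sin (x*a)) :=
      mul_le_mul_of_nonneg_right hK hQ
    have t2 : Real.sinh y * Real.cosh (y*a) * (Real.cos x * Real.cos (x*a) + Real.sin x * Real.sin (x*a)) ≤
        Real.sinh y * Real.cosh (y*a) * 1 := mul_le_mul_of_nonneg_left hP hSc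
    nlinarith [t1, t2, hp1]
  · have t1 : Real.cosh y * Real.sinh (y*a) * (Real.sin x * Real.sin (x*a)) ≤ 0 := by
      apply mul_nonpos_of_nonneg_of_nonpos (by positivity) hQ.le
    have t2 : Real.sinh y * Real.cosh (y*a) * (Real.cos x * Real.cos (x*a)) ≤
        Real.sinh y * Real.cosh (y*a) * 1 := mul_le_mul_of_nonneg_left hP1 hSc
    nlinarith [t1, t2, hp1]

lemma hasDeriv_cosh_mul (ξ : ℂ) (t : ℝ) :
    HasDerivAt (fun s : ℝ => Complex.cosh (ξ * s)) (ξ * Complex.sinh (ξ * t)) t := by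
  have h1 : HasDerivAt (fun w : ℂ => Complex.cosh (ξ * w)) (ξ * Complex.sinh (ξ * t)) (t : ℂ) := by
    have h2 := (Complex.hasDerivAt_cosh (ξ * (t:ℂ))).comp (t:ℂ)
      ((hasDerivAt_id ((t:ℝ):ℂ)).const_mul ξ)
    simpa [mul_comm, Function.comp_def] using h2
  exact h1.comp_ofReal

lemma cont_sinh_mul (ξ : ℂ) : Continuous (fun t : ℝ => ξ * Complex.sinh (ξ * t)) :=
  continuous_const.mul (Complex.continuous_sinh.comp (continuous_const.mul Complex.continuous_ofReal))

lemma tail_int (ξ : ℂ) (a : ℝ) (ha : a ≤ 1) :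
    ∫ t in Set.Ioo a (1:ℝ), (ξ * Complex.sinh (ξ * t)) =
      Complex.cosh ξ - Complex.cosh (ξ * a) := by
  have h := intervalIntegral.integral_eq_sub_of_hasDerivAt
    (f := fun s : ℝ => Complex.cosh (ξ * s)) (a := a) (b := 1)
    (fun t _ => hasDeriv_cosh_mul ξ t) ((cont_sinh_mul ξ).intervalIntegrable a 1)
  rw [intervalIntegral.integral_of_le ha, MeasureTheory.integral_Ioc_eq_integral_Ioo] at h
  simpa using h

lemma tail_phi (ξ : ℂ) (a : ℝ) (ha : a ≤ 1) :
    ∫ t in Set.Ioo a (1:ℝ), ((starRingEnd ℂ) (Complex.sinh ξ) * (ξ * Complex.sinh (ξ * t))).re =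
      ((starRingEnd ℂ) (Complex.sinh ξ) * (Complex.cosh ξ - Complex.cosh (ξ * a))).re := by
  have hcont : Continuous (fun t : ℝ =>
      (starRingEnd ℂ) (Complex.sinh ξ) * (ξ * Complex.sinh (ξ * t))) :=
    continuous_const.mul (cont_sinh_mul ξ)
  have hInt : MeasureTheory.IntegrableOn (fun t : ℝ =>
      (starRingEnd ℂ) (Complex.sinh ξ) * (ξ * Complex.sinh (ξ * t))) (Set.Ioo a 1) :=
    (hcont.integrableOn_Icc (a := a) (b := 1)).mono_set Set.Ioo_subset_Icc_self
  have hre := ContinuousLinearMap.integral_comp_comm Complex.reCLM hInt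
  simp only [Complex.reCLM_apply] at hre
  rw [hre]
  rw [show (∫ t in Set.Ioo a (1:ℝ), (starRingEnd ℂ) (Complex.sinh ξ) * (ξ * Complex.sinh (ξ * t)))
      = (starRingEnd ℂ) (Complex.sinh ξ) * ∫ t in Set.Ioo a (1:ℝ), (ξ * Complex.sinh (ξ * t))
      from MeasureTheory.integral_const_mul _ _]
  rw [tail_int ξ a ha]


lemma norm_sinh_le (w : ℂ) : ‖Complex.sinh w‖ ≤ Real.exp ‖w‖ := by
  rw [Complex.sinh, norm_div]
  have h2 : ‖Complex.exp w‖ ≤ Real.exp ‖w‖ := by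
    rw [Complex.norm_exp]
    exact Real.exp_le_exp.2 ((le_abs_self w.re).trans (Complex.abs_re_le_norm w))
  have h3 : ‖Complex.exp (-w)‖ ≤ Real.exp ‖w‖ := by
    rw [Complex.norm_exp]
    refine Real.exp_le_exp.2 ?_
    have := (le_abs_self (-w).re).trans (Complex.abs_re_le_norm (-w))
    simpa using this
  have h1 : ‖Complex.exp w - Complex.exp (-w)‖ ≤ Real.exp ‖w‖ + Real.exp ‖w‖ :=
    (norm_sub_le _ _).trans (add_le_add h2 h3)
  have : ‖(2:ℂ)‖ = 2 := by norm_num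
  rw [this]
  linarith

lemma polya_core (f : ℝ → ℝ)
    (hpos : ∀ t ∈ Set.Ioo (0:ℝ) 1, 0 < f t)
    (hmono : MonotoneOn f (Set.Ioo (0:ℝ) 1))
    (hint : MeasureTheory.IntegrableOn f (Set.Ioo (0:ℝ) 1))
    (ξ : ℂ) (hy : 0 < ξ.re)
    (h0 : (∫ t in Set.Ioo (0:ℝ) 1, f t • Complex.sinh (ξ * t)) = 0) : False := by
  set y := ξ.re with hyy
  set ν := MeasureTheory.volume.restrict (Set.Ioo (0:ℝ) 1) with hν
  set μl := MeasureTheory.volume.restrict (Set.Ioi (0:ℝ)) with hμl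
  set φ : ℝ → ℝ :=
    fun t => ((starRingEnd ℂ) (Complex.sinh ξ) * (ξ * Complex.sinh (ξ * t))).re with hφ
  set A : ℝ → ℂ := fun t => (starRingEnd ℂ) (Complex.sinh ξ) * (ξ * Complex.sinh (ξ * t)) with hA
  have hAcont : Continuous A := continuous_const.mul (cont_sinh_mul ξ)
  have hφcont : Continuous φ := Complex.continuous_re.comp hAcont
  set C : ℝ := ‖Complex.sinh ξ‖ * (‖ξ‖ * Real.exp ‖ξ‖) with hC
  have hbound : ∀ t : ℝ, t ∈ Set.Ioo (0:ℝ) 1 → ‖A t‖ ≤ C := by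
    intro t ht
    rw [hA]
    simp only [norm_mul, RCLike.norm_conj]
    rw [hC]
    have h1 : ‖Complex.sinh (ξ * t)‖ ≤ Real.exp ‖ξ‖ := by
      refine (norm_sinh_le _).trans (Real.exp_le_exp.2 ?_)
      rw [norm_mul, Complex.norm_real, Real.norm_eq_abs, abs_of_pos ht.1]
      nlinarith [norm_nonneg ξ, ht.2, ht.1]
    gcongr
  have hφbound : ∀ t : ℝ, t ∈ Set.Ioo (0:ℝ) 1 → ‖φ t‖ ≤ C := by
    intro t ht
    refine le_trans ?_ (hbound t ht)
    rw [hφ, Real.norm_eq_abs]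
    exact Complex.abs_re_le_norm _
  -- Part 1 : M0 = 0
  have hIcplx : MeasureTheory.Integrable (fun t => A t * ((f t : ℝ) : ℂ)) ν := by
    refine MeasureTheory.Integrable.bdd_mul (c := C) hint.ofReal
      hAcont.aestronglyMeasurable ?_
    filter_upwards [MeasureTheory.ae_restrict_mem measurableSet_Ioo] with t ht
    exact hbound t ht
  have hM0 : (∫ t, f t * φ t ∂ν) = 0 := by
    have hre := ContinuousLinearMap.integral_comp_comm Complex.reCLM hIcplx
    simp only [Complex.reCLM_apply] at hre
    have e1 : (∫ t, f t * φ t ∂ν) = ∫ t, (A t * ((f t : ℝ) : ℂ)).re ∂ν := by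
      apply MeasureTheory.integral_congr_ae
      filter_upwards with t
      have e0 : (A t * ((f t : ℝ) : ℂ)).re = (A t).re * f t := by
        simp [Complex.mul_re]
      rw [e0, mul_comm]
    have e2 : (∫ t, A t * ((f t : ℝ) : ℂ) ∂ν)
        = ((starRingEnd ℂ) (Complex.sinh ξ) * ξ) * ∫ t, f t • Complex.sinh (ξ * t) ∂ν := by
      rw [← MeasureTheory.integral_const_mul]
      apply MeasureTheory.integral_congr_ae
      filter_upwards with t
      rw [Complex.real_smul, hA]
      ring
    rw [e1, hre, e2, h0, mul_zero, Complex.zero_re]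
  -- the product function
  set gp : ℝ × ℝ → ℝ :=
    fun p => φ p.1 * Set.indicator (Set.Ioi (0:ℝ)) (fun _ => (1:ℝ)) (f p.1 - p.2) with hgp
  -- slice integral computation
  have slice : ∀ (t : ℝ), 0 ≤ f t → ∀ r : ℝ,
      (∫ l, r * Set.indicator (Set.Ioi (0:ℝ)) (fun _ => (1:ℝ)) (f t - l) ∂μl) = r * f t := by
    intro t hft r
    have e : (fun l => r * Set.indicator (Set.Ioi (0:ℝ)) (fun _ => (1:ℝ)) (f t - l))
        = Set.indicator (Set.Iio (f t)) (fun _ => r) := by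
      funext l
      by_cases hl : l < f t
      · rw [Set.indicator_of_mem (Set.mem_Ioi.2 (sub_pos.2 hl)),
          Set.indicator_of_mem (Set.mem_Iio.2 hl), mul_one]
      · rw [Set.indicator_of_notMem (fun hmem => hl (sub_pos.1 (Set.mem_Ioi.1 hmem))),
          Set.indicator_of_notMem (fun hmem => hl (Set.mem_Iio.1 hmem)), mul_zero]
    rw [e, MeasureTheory.integral_indicator measurableSet_Iio]
    rw [MeasureTheory.Measure.restrict_restrict measurableSet_Iio]
    rw [MeasureTheory.setIntegral_const]
    rw [Set.Iio_inter_Ioi, Real.volume_real_Ioo_of_le hft, smul_eq_mul]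
    rw [sub_zero]
    ring
  have hslicenorm : ∀ (t : ℝ), 0 ≤ f t →
      (∫ l, ‖gp (t, l)‖ ∂μl) = ‖φ t‖ * f t := by
    intro t hft
    have e : (fun l => ‖gp (t, l)‖)
        = fun l => ‖φ t‖ * Set.indicator (Set.Ioi (0:ℝ)) (fun _ => (1:ℝ)) (f t - l) := by
      funext l
      show ‖φ t * Set.indicator (Set.Ioi (0:ℝ)) (fun _ => (1:ℝ)) (f t - l)‖ = _
      simp only [norm_mul]
      congr 1
      by_cases hl : f t - l ∈ Set.Ioi (0:ℝ)
      · rw [Set.indicator_of_mem hl]; norm_num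
      · rw [Set.indicator_of_notMem hl]; norm_num
    rw [e, slice t hft]
  -- measurability
  have hgpm : MeasureTheory.AEStronglyMeasurable gp (ν.prod μl) := by
    have h1 : MeasureTheory.AEStronglyMeasurable (fun p : ℝ × ℝ => f p.1) (ν.prod μl) :=
      hint.aestronglyMeasurable.comp_fst
    have h2 : AEMeasurable (fun p : ℝ × ℝ => f p.1 - p.2) (ν.prod μl) :=
      h1.aemeasurable.sub measurable_snd.aemeasurable
    have h3 : Measurable (Set.indicator (Set.Ioi (0:ℝ)) (fun _ => (1:ℝ))) :=
      measurable_const.indicator measurableSet_Ioi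
    have h4 : AEMeasurable
        (fun p : ℝ × ℝ => Set.indicator (Set.Ioi (0:ℝ)) (fun _ => (1:ℝ)) (f p.1 - p.2))
        (ν.prod μl) := h3.comp_aemeasurable h2
    exact ((hφcont.comp continuous_fst).aestronglyMeasurable).mul h4.aestronglyMeasurable
  -- integrability on the product
  have hgpint : MeasureTheory.Integrable gp (ν.prod μl) := by
    rw [MeasureTheory.integrable_prod_iff hgpm]
    constructor
    · filter_upwards [MeasureTheory.ae_restrict_mem measurableSet_Ioo] with t ht
      have e : (fun l => gp (t, l)) = Set.indicator (Set.Iio (f t)) (fun _ => φ t) := by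
        funext l
        show φ t * Set.indicator (Set.Ioi (0:ℝ)) (fun _ => (1:ℝ)) (f t - l) = _
        by_cases hl : l < f t
        · rw [Set.indicator_of_mem (Set.mem_Ioi.2 (sub_pos.2 hl)),
            Set.indicator_of_mem (Set.mem_Iio.2 hl), mul_one]
        · rw [Set.indicator_of_notMem (fun hmem => hl (sub_pos.1 (Set.mem_Ioi.1 hmem))),
            Set.indicator_of_notMem (fun hmem => hl (Set.mem_Iio.1 hmem)), mul_zero]
      rw [e]
      rw [MeasureTheory.integrable_indicator_iff measurableSet_Iio]
      refine (MeasureTheory.integrableOn_const_iff).2 (Or.inr ?_)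
      rw [MeasureTheory.Measure.restrict_apply measurableSet_Iio, Set.Iio_inter_Ioi,
        Real.volume_Ioo]
      exact ENNReal.ofReal_lt_top
    · have hI : MeasureTheory.Integrable (fun t => ‖φ t‖ * f t) ν := by
        refine MeasureTheory.Integrable.bdd_mul (c := C) hint ?_ ?_
        · exact hφcont.norm.aestronglyMeasurable
        · filter_upwards [MeasureTheory.ae_restrict_mem measurableSet_Ioo] with t ht
          rw [norm_norm]
          exact hφbound t ht
      refine hI.congr ?_
      filter_upwards [MeasureTheory.ae_restrict_mem measurableSet_Ioo] with t ht
      exact (hslicenorm t (hpos t ht).le).symm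
  -- the marginal in the level variable
  set G : ℝ → ℝ := fun l => ∫ t, gp (t, l) ∂ν with hG
  have hGint : MeasureTheory.Integrable G μl := hgpint.integral_prod_right
  -- swap the integrals
  have hswap : (∫ t, f t * φ t ∂ν) = ∫ l, G l ∂μl := by
    have h1 := MeasureTheory.integral_integral_swap (f := fun t l => gp (t, l))
      (μ := ν) (ν := μl) hgpint
    have h2 : (∫ t, ∫ l, gp (t, l) ∂μl ∂ν) = ∫ t, f t * φ t ∂ν := by
      apply MeasureTheory.integral_congr_ae
      filter_upwards [MeasureTheory.ae_restrict_mem measurableSet_Ioo] with t ht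
      have := slice t (hpos t ht).le (φ t)
      calc (∫ l, gp (t, l) ∂μl)
          = ∫ l, φ t * Set.indicator (Set.Ioi (0:ℝ)) (fun _ => (1:ℝ)) (f t - l) ∂μl := rfl
        _ = φ t * f t := slice t (hpos t ht).le (φ t)
        _ = f t * φ t := mul_comm _ _
    rw [← h2, h1]
  -- value of G
  have hGval : ∀ l : ℝ, 0 < l →
      (G l = 0 ∧ ¬ (l < f (1/2))) ∨
      (∃ a : ℝ, 0 ≤ a ∧ a < 1 ∧ (l < f (1/2) → a ≤ 1/2) ∧
        G l = ((starRingEnd ℂ) (Complex.sinh ξ) *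
          (Complex.cosh ξ - Complex.cosh (ξ * a))).re) := by
    intro l hl
    set S : Set ℝ := {t | t ∈ Set.Ioo (0:ℝ) 1 ∧ l < f t} with hS
    by_cases hne : S.Nonempty
    · right
      have hbdd : BddBelow S := ⟨0, fun t ht => ht.1.1.le⟩
      set a := sInf S with ha
      have h0a : 0 ≤ a := le_csInf hne (fun t ht => ht.1.1.le)
      obtain ⟨t₀, ht₀⟩ := hne
      have ha1 : a < 1 := lt_of_le_of_lt (csInf_le hbdd ht₀) ht₀.1.2
      have hhalf : l < f (1/2) → a ≤ 1/2 := fun h =>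
        csInf_le hbdd ⟨⟨by norm_num, by norm_num⟩, h⟩
      refine ⟨a, h0a, ha1, hhalf, ?_⟩
      have hmem : ∀ t, a < t → t < 1 → t ∈ S := by
        intro t h₁ h₂
        obtain ⟨s, hsS, hst⟩ := exists_lt_of_csInf_lt ⟨t₀, ht₀⟩ h₁
        have htIoo : t ∈ Set.Ioo (0:ℝ) 1 := ⟨lt_trans hsS.1.1 hst, h₂⟩
        exact ⟨htIoo, lt_of_lt_of_le hsS.2 (hmono hsS.1 htIoo hst.le)⟩
      have hae : ∀ᵐ t ∂ν, t ≠ a := by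
        rw [MeasureTheory.ae_iff]
        refine MeasureTheory.measure_mono_null (fun t ht => ?_)
          (show ν {a} = 0 from le_antisymm
            ((MeasureTheory.Measure.restrict_apply_le _ _).trans_eq Real.volume_singleton)
            zero_le)
        simpa using ht
      have hcongr : (fun t => gp (t, l)) =ᵐ[ν]
          Set.indicator (Set.Ioo a 1) φ := by
        filter_upwards [MeasureTheory.ae_restrict_mem measurableSet_Ioo, hae] with t ht htne
        show φ t * Set.indicator (Set.Ioi (0:ℝ)) (fun _ => (1:ℝ)) (f t - l) = _
        by_cases hta : t ∈ Set.Ioo a 1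
        · have htS : t ∈ S := hmem t hta.1 hta.2
          rw [Set.indicator_of_mem (Set.mem_Ioi.2 (sub_pos.2 htS.2)),
            Set.indicator_of_mem hta, mul_one]
        · have htS : t ∉ S := by
            intro hcon
            have : a ≤ t := csInf_le hbdd hcon
            exact hta ⟨lt_of_le_of_ne this (Ne.symm htne), ht.2⟩
          have : ¬ (l < f t) := fun hcon => htS ⟨ht, hcon⟩
          rw [Set.indicator_of_notMem (fun hmem' => this (sub_pos.1 (Set.mem_Ioi.1 hmem'))),
            Set.indicator_of_notMem hta, mul_zero]
      have : G l = ∫ t in Set.Ioo a 1, φ t := by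
        rw [hG]
        show (∫ t, gp (t, l) ∂ν) = _
        rw [MeasureTheory.integral_congr_ae hcongr,
          MeasureTheory.integral_indicator measurableSet_Ioo,
          MeasureTheory.Measure.restrict_restrict measurableSet_Ioo]
        congr 1
        rw [Set.inter_eq_left.2]
        intro t ht
        exact ⟨lt_of_le_of_lt h0a ht.1, ht.2⟩
      rw [this]
      exact tail_phi ξ a ha1.le
    · left
      constructor
      · rw [hG]
        show (∫ t, gp (t, l) ∂ν) = 0
        have : (fun t => gp (t, l)) =ᵐ[ν] (fun _ => (0:ℝ)) := by
          filter_upwards [MeasureTheory.ae_restrict_mem measurableSet_Ioo] with t ht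
          show φ t * Set.indicator (Set.Ioi (0:ℝ)) (fun _ => (1:ℝ)) (f t - l) = 0
          have : ¬ (l < f t) := fun hcon => hne ⟨t, ht, hcon⟩
          rw [Set.indicator_of_notMem (fun hmem' => this (sub_pos.1 (Set.mem_Ioi.1 hmem'))),
            mul_zero]
        rw [MeasureTheory.integral_congr_ae this, MeasureTheory.integral_zero]
      · intro hcon
        exact hne ⟨1/2, ⟨by norm_num, by norm_num⟩, hcon⟩
  -- positivity facts
  have hf12 : 0 < f (1/2) := hpos _ ⟨by norm_num, by norm_num⟩
  set δ : ℝ := Real.sinh y * (Real.cosh y - Real.cosh (y * (1/2))) with hδdef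
  have hδ : 0 < δ := by
    refine mul_pos (Real.sinh_pos_iff.2 hy) (sub_pos.2 (Real.cosh_lt_cosh.2 ?_))
    rw [_root_.abs_of_pos hy, _root_.abs_of_pos (by linarith : (0:ℝ) < y * (1/2))]
    linarith
  have hGnonneg : ∀ l ∈ Set.Ioi (0:ℝ), 0 ≤ G l := by
    intro l hl
    rcases hGval l hl with ⟨h1, _⟩ | ⟨a, h0a, ha1, _, hval⟩
    · rw [h1]
    · rw [hval]
      refine le_trans ?_ (key_ineq ξ hy a h0a ha1.le)
      refine mul_nonneg (Real.sinh_pos_iff.2 hy).le (sub_nonneg.2 (Real.cosh_le_cosh.2 ?_))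
      rw [_root_.abs_of_pos hy, _root_.abs_of_nonneg (by positivity : (0:ℝ) ≤ y * a)]
      nlinarith
  have hGdelta : ∀ l ∈ Set.Ioo (0:ℝ) (f (1/2)), δ ≤ G l := by
    intro l hl
    rcases hGval l hl.1 with ⟨_, h2⟩ | ⟨a, h0a, ha1, hhalf, hval⟩
    · exact absurd hl.2 h2
    · rw [hval]
      refine le_trans ?_ (key_ineq ξ hy a h0a ha1.le)
      rw [hδdef]
      have : Real.cosh (y * a) ≤ Real.cosh (y * (1/2)) := by
        refine Real.cosh_le_cosh.2 ?_
        rw [_root_.abs_of_nonneg (by positivity : (0:ℝ) ≤ y * a),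
          _root_.abs_of_pos (by linarith : (0:ℝ) < y * (1/2))]
        nlinarith [hhalf hl.2]
      have hsy : 0 < Real.sinh y := Real.sinh_pos_iff.2 hy
      nlinarith
  -- final chain
  have hIooIoi : Set.Ioo (0:ℝ) (f (1/2)) ⊆ Set.Ioi (0:ℝ) := fun t ht => ht.1
  have hGint' : MeasureTheory.IntegrableOn G (Set.Ioi (0:ℝ)) MeasureTheory.volume := by
    rw [MeasureTheory.IntegrableOn, ← hμl]; exact hGint
  have hc1 : (∫ l in Set.Ioo (0:ℝ) (f (1/2)), δ) ≤ ∫ l in Set.Ioo (0:ℝ) (f (1/2)), G l := by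
    refine MeasureTheory.setIntegral_mono_on ?_ ?_ measurableSet_Ioo ?_
    · exact (MeasureTheory.integrableOn_const_iff).2 (Or.inr (by
        rw [Real.volume_Ioo]; exact ENNReal.ofReal_lt_top))
    · exact hGint'.mono_set hIooIoi
    · exact fun l hl => hGdelta l hl
  have hc2 : (∫ l in Set.Ioo (0:ℝ) (f (1/2)), G l) ≤ ∫ l in Set.Ioi (0:ℝ), G l := by
    refine MeasureTheory.setIntegral_mono_set hGint' ?_ (hIooIoi.eventuallyLE)
    exact (MeasureTheory.ae_restrict_iff' measurableSet_Ioi).2 (Filter.Eventually.of_forall hGnonneg)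
  have hc0 : (∫ l in Set.Ioo (0:ℝ) (f (1/2)), δ) = δ * f (1/2) := by
    rw [MeasureTheory.setIntegral_const, Real.volume_real_Ioo_of_le hf12.le, smul_eq_mul,
      sub_zero]
    ring
  have hpos' : (0:ℝ) < ∫ l in Set.Ioi (0:ℝ), G l := by
    have : 0 < δ * f (1/2) := mul_pos hδ hf12
    linarith [hc0 ▸ hc1, hc2]
  have hfin : (∫ l in Set.Ioi (0:ℝ), G l) = 0 := by
    rw [← hμl, ← hswap, hM0]
  rw [hfin] at hpos'
  exact lt_irrefl _ hpos'

/-- (Pólya, 1918, first part) If `f` is positive and nondecreasing on `(0,1)` and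
integrable, then every zero of `V(z) = ∫_0^1 sin(z t) f(t) dt` is real. -/
theorem polya_zeros_real (f : ℝ → ℝ)
    (hpos : ∀ t ∈ Set.Ioo (0:ℝ) 1, 0 < f t)
    (hmono : MonotoneOn f (Set.Ioo (0:ℝ) 1))
    (hint : MeasureTheory.IntegrableOn f (Set.Ioo (0:ℝ) 1)) :
    ∀ z : ℂ,
      (∫ t in (0:ℝ)..1, Complex.sin (z * (t : ℂ)) * ((f t : ℝ) : ℂ)) = 0 →
      ∃ r : ℝ, z = (r : ℂ) := by
  intro z hz
  by_cases him : z.im = 0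
  · exact ⟨z.re, by apply Complex.ext <;> simp [him]⟩
  · exfalso
    have key0 : (∫ t in Set.Ioo (0:ℝ) 1, f t • Complex.sinh ((Complex.I * z) * t)) = 0 := by
      have h1 : (∫ t in (0:ℝ)..1, Complex.sin (z * (t:ℂ)) * ((f t : ℝ) : ℂ))
          = ∫ t in Set.Ioo (0:ℝ) 1, Complex.sin (z * (t:ℂ)) * ((f t : ℝ) : ℂ) := by
        rw [intervalIntegral.integral_of_le zero_le_one,
          MeasureTheory.integral_Ioc_eq_integral_Ioo]
      rw [h1] at hz
      have h2 : ∀ t : ℝ, Complex.sin (z*(t:ℂ)) * ((f t : ℝ) : ℂ)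
          = (-Complex.I) * (f t • Complex.sinh ((Complex.I * z) * t)) := by
        intro t
        have h3 : Complex.sinh ((Complex.I*z)*(t:ℂ)) = Complex.sin (z*(t:ℂ)) * Complex.I := by
          rw [show (Complex.I*z)*(t:ℂ) = (z*(t:ℂ))*Complex.I by ring, Complex.sinh_mul_I]
        rw [h3, Complex.real_smul]
        linear_combination (Complex.sin (z*(t:ℂ)) * ((f t : ℝ):ℂ)) * Complex.I_mul_I
      have h4 : (∫ t in Set.Ioo (0:ℝ) 1, Complex.sin (z*(t:ℂ)) * ((f t : ℝ) : ℂ))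
          = (-Complex.I) * ∫ t in Set.Ioo (0:ℝ) 1, f t • Complex.sinh ((Complex.I * z) * t) := by
        rw [← MeasureTheory.integral_const_mul]
        exact MeasureTheory.integral_congr_ae (Filter.Eventually.of_forall fun t => h2 t)
      rw [h4] at hz
      rcases mul_eq_zero.1 hz with hI | hgood
      · exact absurd hI (by simp [Complex.ext_iff])
      · exact hgood
    rcases lt_or_gt_of_ne him with himneg | himpos
    · refine polya_core f hpos hmono hint (Complex.I * z) ?_ key0
      simp only [Complex.mul_re, Complex.I_re, Complex.I_im]
      simpa using neg_pos.2 himneg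
    · refine polya_core f hpos hmono hint (-(Complex.I * z)) ?_ ?_
      · simp only [Complex.neg_re, Complex.mul_re, Complex.I_re, Complex.I_im]
        simpa using himpos
      · have : ∀ t : ℝ, f t • Complex.sinh ((-(Complex.I * z)) * t)
            = -(f t • Complex.sinh ((Complex.I * z) * t)) := by
          intro t
          rw [show (-(Complex.I*z))*(t:ℂ) = -((Complex.I*z)*(t:ℂ)) by ring, Complex.sinh_neg,
            smul_neg]
        rw [MeasureTheory.integral_congr_ae (Filter.Eventually.of_forall this),
          MeasureTheory.integral_neg, key0, neg_zero]
end

section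
/- Let a, b, c be real numbers and let y : ℝ → ℝ be twice differentiable with y''(x) = (a·x + b)·y(x) + c for all x ∈ ℝ and with y(0) = 0 and y'(0) = 0. Then for every z ∈ ℝ the first-integral identity (y'(z))² = (a·z + b)·y(z)² + 2c·y(z) − a·∫_0^z y(x)² dx holds. -/
/-- First integral: if `y'' = (a x + b) y + c` on ℝ with `y(0) = y'(0) = 0`, then
`(y'(z))² = (a z + b) y(z)² + 2 c y(z) − a ∫_0^z y(x)² dx`. -/
theorem nonhomogeneous_airy_first_integral (a b c : ℝ) (y : ℝ → ℝ)
    (hy : Differentiable ℝ y) (hy' : Differentiable ℝ (deriv y))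
    (hode : ∀ x : ℝ, deriv (deriv y) x = (a * x + b) * y x + c)
    (h0 : y 0 = 0) (h0' : deriv y 0 = 0) :
    ∀ z : ℝ, (deriv y z) ^ 2
      = (a * z + b) * (y z) ^ 2 + 2 * c * y z - a * ∫ x in (0:ℝ)..z, (y x) ^ 2 := by
  have hcont : Continuous fun x : ℝ => (y x) ^ 2 := (hy.continuous.pow 2)
  set F : ℝ → ℝ := fun z =>
    (deriv y z) ^ 2 - ((a * z + b) * (y z) ^ 2 + 2 * c * y z
      - a * ∫ x in (0:ℝ)..z, (y x) ^ 2) with hF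
  have hderiv : ∀ z : ℝ, HasDerivAt F 0 z := by
    intro z
    have hInt : HasDerivAt (fun u => ∫ x in (0:ℝ)..u, (y x) ^ 2) ((y z) ^ 2) z :=
      intervalIntegral.integral_hasDerivAt_right
        (hcont.intervalIntegrable 0 z) (hcont.stronglyMeasurableAtFilter _ _)
        hcont.continuousAt
    have h1 : HasDerivAt (fun u => (deriv y u) ^ 2)
        (2 * deriv y z * ((a * z + b) * y z + c)) z := by
      have := ((hy' z).hasDerivAt.fun_pow 2)
      simpa [hode z, mul_comm, mul_assoc] using this
    have h2 : HasDerivAt (fun u => (a * u + b) * (y u) ^ 2)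
        (a * (y z) ^ 2 + (a * z + b) * (2 * y z * deriv y z)) z := by
      have ha : HasDerivAt (fun u : ℝ => a * u + b) a z := by
        simpa using ((hasDerivAt_id z).const_mul a).add_const b
      have hsq : HasDerivAt (fun u => (y u) ^ 2) (2 * y z * deriv y z) z := by
        simpa [mul_comm, mul_assoc] using ((hy z).hasDerivAt.fun_pow 2)
      simpa [mul_comm, mul_assoc] using ha.fun_mul hsq
    have h3 : HasDerivAt (fun u => 2 * c * y u) (2 * c * deriv y z) z :=
      ((hy z).hasDerivAt.const_mul (2 * c))
    have h4 : HasDerivAt (fun u => a * ∫ x in (0:ℝ)..u, (y x) ^ 2)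
        (a * (y z) ^ 2) z := hInt.const_mul a
    have := h1.fun_sub ((h2.fun_add h3).fun_sub h4)
    exact this.congr_deriv (by ring)
  have hFdiff : Differentiable ℝ F := fun z => (hderiv z).differentiableAt
  have hconst : ∀ z : ℝ, F z = F 0 :=
    fun z => is_const_of_deriv_eq_zero hFdiff (fun x => (hderiv x).deriv) z 0
  intro z
  have := hconst z
  simp only [hF, h0, h0'] at this
  simp only [intervalIntegral.integral_same] at this
  linarith [this]
end

section
/- Let a, b, c be real numbers with a ≠ 0 and c ≠ 0, and let y : ℝ → ℝ be twice differentiable with y''(x) = (a·x + b)·y(x) + c for all x, and y(0) = 0, y'(0) = 0. Then y has no other real double zero: for every p ∈ ℝ with p ≠ 0, it is not the case that both y(p) = 0 and y'(p) = 0. -/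
open intervalIntegral Filter Set

/-- If `a ≠ 0`, `c ≠ 0` and `y'' = (a x + b) y + c` with a double zero at `0`, then
`y` has no other real double zero. -/
theorem nonhomogeneous_airy_no_second_double_zero (a b c : ℝ) (ha : a ≠ 0) (hc : c ≠ 0)
    (y : ℝ → ℝ)
    (hy : Differentiable ℝ y) (hy' : Differentiable ℝ (deriv y))
    (hode : ∀ x : ℝ, deriv (deriv y) x = (a * x + b) * y x + c)
    (h0 : y 0 = 0) (h0' : deriv y 0 = 0) :
    ∀ p : ℝ, p ≠ 0 → ¬(y p = 0 ∧ deriv y p = 0) := by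
  intro p hp hdz
  obtain ⟨hyp, hyp'⟩ := hdz
  have hycont : Continuous y := hy.continuous
  have hsq : Continuous fun t => (y t) ^ 2 := hycont.pow 2
  set g : ℝ → ℝ := fun z => ∫ t in (0:ℝ)..z, (y t) ^ 2 with hgdef
  have hgd : ∀ z, HasDerivAt g ((y z) ^ 2) z := fun z =>
    integral_hasDerivAt_right (hsq.intervalIntegrable 0 z)
      hsq.aestronglyMeasurable.stronglyMeasurableAtFilter hsq.continuousAt
  set F : ℝ → ℝ := fun z => (deriv y z) ^ 2 - (a * z + b) * (y z) ^ 2 - 2 * c * y z + a * g z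
    with hFdef
  have hFd : ∀ z, HasDerivAt F 0 z := by
    intro z
    have h1 : HasDerivAt (fun z => (deriv y z) ^ 2)
        (2 * deriv y z * deriv (deriv y) z) z := by
      have := ((hy' z).hasDerivAt).fun_pow 2
      simpa [mul_comm, mul_assoc] using this
    have hlin : HasDerivAt (fun z : ℝ => a * z + b) a z := by
      simpa using ((hasDerivAt_id z).const_mul a).add_const b
    have hysq : HasDerivAt (fun z => (y z) ^ 2) (2 * y z * deriv y z) z := by
      have := ((hy z).hasDerivAt).fun_pow 2
      simpa [mul_comm, mul_assoc] using this
    have h2 : HasDerivAt (fun z => (a * z + b) * (y z) ^ 2)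
        (a * (y z) ^ 2 + (a * z + b) * (2 * y z * deriv y z)) z := hlin.mul hysq
    have h3 : HasDerivAt (fun z => 2 * c * y z) (2 * c * deriv y z) z :=
      ((hy z).hasDerivAt).const_mul (2 * c)
    have h4 : HasDerivAt (fun z => a * g z) (a * (y z) ^ 2) z := (hgd z).const_mul a
    have h5 := ((h1.sub h2).sub h3).add h4
    have he : 2 * deriv y z * deriv (deriv y) z -
        (a * (y z) ^ 2 + (a * z + b) * (2 * y z * deriv y z)) - 2 * c * deriv y z +
        a * (y z) ^ 2 = 0 := by
      rw [hode z]; ring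
    rw [he] at h5
    exact h5
  have hFconst : F p = F 0 :=
    is_const_of_deriv_eq_zero (fun z => (hFd z).differentiableAt) (fun z => (hFd z).deriv) p 0
  have hF0 : F 0 = 0 := by
    simp [hFdef, hgdef, h0, h0', integral_same]
  have hgp : g p = 0 := by
    have hFp : F p = a * g p := by simp [hFdef, hyp, hyp']
    have : a * g p = 0 := by rw [← hFp, hFconst, hF0]
    exact (mul_eq_zero.mp this).resolve_left ha
  have hg0 : g 0 = 0 := integral_same
  have hgmono : Monotone g :=
    monotone_of_deriv_nonneg (fun z => (hgd z).differentiableAt)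
      (fun z => by rw [(hgd z).deriv]; positivity)
  set l := min p 0 with hl
  set r := max p 0 with hr
  have hlr : l < r := min_lt_max.mpr hp
  have hgl : g l = 0 := by rcases min_choice p 0 with h | h <;> rw [hl, h] <;> assumption
  have hgr : g r = 0 := by rcases max_choice p 0 with h | h <;> rw [hr, h] <;> assumption
  have gzero : ∀ x ∈ Icc l r, g x = 0 := fun x hx =>
    le_antisymm (hgr ▸ hgmono hx.2) (hgl ▸ hgmono hx.1)
  have yzero : ∀ x ∈ Ioo l r, y x = 0 := by
    intro x hx
    have hev : g =ᶠ[nhds x] fun _ => 0 := by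
      filter_upwards [Ioo_mem_nhds hx.1 hx.2] with t ht
      exact gzero t (Ioo_subset_Icc_self ht)
    have hd0 : deriv g x = 0 := by rw [hev.deriv_eq]; simp
    have := (hgd x).deriv
    rw [hd0] at this
    exact pow_eq_zero_iff two_ne_zero |>.mp this.symm
  set m := (l + r) / 2 with hm
  have hmI : m ∈ Ioo l r := ⟨by linarith, by linarith⟩
  have yev : y =ᶠ[nhds m] fun _ => 0 := by
    filter_upwards [Ioo_mem_nhds hmI.1 hmI.2] with t ht
    exact yzero t ht
  have y'ev : deriv y =ᶠ[nhds m] deriv (fun _ => (0:ℝ)) := yev.deriv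
  have y''m : deriv (deriv y) m = 0 := by
    have := y'ev.deriv.eq_of_nhds
    simpa using this
  have hym : y m = 0 := yev.eq_of_nhds
  rw [hode m, hym] at y''m
  simp at y''m
  exact hc y''m
end
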